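/- arXiv:2201.12194 — 5 statements merged into one kernel-verified Lean document; each statement's English description precedes it below -/
import Mathlib

section
/- Let 𝔽 be a field, let ℓ ≥ 0, and let α_{i_1}, …, α_{i_q} be pairwise-distinct elements of 𝔽 with q ≥ ℓ + 1. Let f_{i_1}(x), …, f_{i_q}(x) be univariate polynomials over 𝔽, each of degree at most ℓ, that are pairwise consistent, i.e., f_{i_a}(α_{i_b}) = f_{i_b}(α_{i_a}) holds for all a, b ∈ {1, …, q}. Then there exists a unique symmetric bivariate polynomial F⋆(x, y) over 𝔽 of degree at most ℓ in each variable such that F⋆(x, α_{i_k}) = f_{i_k}(x) as polynomials in x, for every k ∈ {1, …, q}. -/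
open Polynomial

/-- `P : F[X][Y]` viewed as a bivariate polynomial `F(x, y)` (inner variable `x`,
outer variable `y`) is symmetric of degree at most `ℓ` in each variable:
its coefficient matrix `r i j = (P.coeff j).coeff i` is symmetric and supported
on indices `≤ ℓ`. -/
def IsSymBivariate {F : Type*} [Field F] (ℓ : ℕ) (P : Polynomial (Polynomial F)) : Prop :=
  P.natDegree ≤ ℓ ∧ (∀ i, (P.coeff i).natDegree ≤ ℓ) ∧
    ∀ i j, (P.coeff i).coeff j = (P.coeff j).coeff i

theorem stmt0 {F : Type*} [Field F] (ℓ q : ℕ) (hq : ℓ + 1 ≤ q)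
    (α : Fin q → F) (hα : Function.Injective α)
    (f : Fin q → Polynomial F) (hdeg : ∀ k, (f k).natDegree ≤ ℓ)
    (hcons : ∀ a b, (f a).eval (α b) = (f b).eval (α a)) :
    ∃! P : Polynomial (Polynomial F),
      IsSymBivariate ℓ P ∧ ∀ k, Polynomial.eval (Polynomial.C (α k)) P = f k := by
  classical
  set β : Fin (ℓ + 1) → F := fun a => α (Fin.castLE hq a) with hβdef
  have hβinj : Function.Injective β := fun a b h => Fin.castLE_injective hq (hα h)
  have hβs : Set.InjOn β (Finset.univ : Finset (Fin (ℓ + 1))) := hβinj.injOn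
  set L : Fin (ℓ + 1) → F[X] := fun a => Lagrange.basis Finset.univ β a with hLdef
  set g : Fin (ℓ + 1) → F[X] := fun a => f (Fin.castLE hq a) with hgdef
  set P : Polynomial (Polynomial F) :=
    ∑ a : Fin (ℓ + 1), Polynomial.C (g a) * (L a).map Polynomial.C with hPdef
  set Q : Polynomial (Polynomial F) :=
    ∑ a : Fin (ℓ + 1), Polynomial.C (L a) * (g a).map Polynomial.C with hQdef
  -- evaluation of mapped polynomials
  have evmap : ∀ (p : F[X]) (t : F),
      (p.map (Polynomial.C : F →+* F[X])).eval (Polynomial.C t) = Polynomial.C (p.eval t) := by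
    intro p t
    rw [Polynomial.eval_map, Polynomial.eval₂_at_apply]
  have hLdeg : ∀ a, (L a).natDegree ≤ ℓ := by
    intro a
    rw [hLdef, Lagrange.natDegree_basis hβs (Finset.mem_univ a)]
    simp
  have hfdeg : ∀ (p : F[X]), p.natDegree ≤ ℓ →
      p.degree < ((Finset.univ : Finset (Fin (ℓ + 1))).card : WithBot ℕ) := by
    intro p hp
    have h1 : p.degree ≤ (ℓ : WithBot ℕ) :=
      le_trans Polynomial.degree_le_natDegree (by exact_mod_cast hp)
    refine lt_of_le_of_lt h1 ?_
    simp only [Finset.card_univ, Fintype.card_fin]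
    exact_mod_cast Nat.lt_succ_self ℓ
  -- Q interpolates f at every point
  have hQall : ∀ k : Fin q, Q.eval (Polynomial.C (α k)) = f k := by
    intro k
    have h1 : Q.eval (Polynomial.C (α k))
        = ∑ a : Fin (ℓ + 1), Polynomial.C ((f k).eval (β a)) * L a := by
      rw [hQdef, Polynomial.eval_finset_sum]
      refine Finset.sum_congr rfl fun a _ => ?_
      rw [Polynomial.eval_mul, Polynomial.eval_C, evmap]
      have : (g a).eval (α k) = (f k).eval (β a) := by
        rw [hgdef, hβdef]; exact hcons _ _
      rw [this, mul_comm]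
    have h2 : f k = Lagrange.interpolate Finset.univ β (fun a => (f k).eval (β a)) :=
      Lagrange.eq_interpolate hβs (hfdeg _ (hdeg k))
    rw [h1]
    simp only [hLdef]
    rw [← Lagrange.interpolate_apply]
    exact h2.symm
  -- P interpolates f at the first ℓ+1 points
  have hPeval : ∀ a : Fin (ℓ + 1), P.eval (Polynomial.C (β a)) = g a := by
    intro a
    rw [hPdef, Polynomial.eval_finset_sum]
    have h1 : ∀ b : Fin (ℓ + 1),
        (Polynomial.C (g b) * (L b).map Polynomial.C).eval (Polynomial.C (β a))
          = g b * Polynomial.C ((L b).eval (β a)) := by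
      intro b; rw [Polynomial.eval_mul, Polynomial.eval_C, evmap]
    rw [Finset.sum_congr rfl fun b _ => h1 b]
    rw [Finset.sum_eq_single a]
    · rw [hLdef, Lagrange.eval_basis_self hβs (Finset.mem_univ a)]; simp
    · intro b _ hba
      rw [hLdef, Lagrange.eval_basis_of_ne hba (Finset.mem_univ a)]; simp
    · intro h; exact absurd (Finset.mem_univ a) h
  -- degree bounds
  have hPnd : P.natDegree ≤ ℓ := by
    refine Polynomial.natDegree_sum_le_of_forall_le _ _ fun a _ => ?_
    exact (Polynomial.natDegree_C_mul_le _ _).trans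
      (Polynomial.natDegree_map_le.trans (hLdeg a))
  have hQnd : Q.natDegree ≤ ℓ := by
    refine Polynomial.natDegree_sum_le_of_forall_le _ _ fun a _ => ?_
    exact (Polynomial.natDegree_C_mul_le _ _).trans
      (Polynomial.natDegree_map_le.trans (hdeg _))
  -- Q = P
  have hCβinj : Function.Injective (fun a : Fin (ℓ + 1) => (Polynomial.C (β a) : F[X])) :=
    fun a b h => hβinj (Polynomial.C_injective h)
  have hQP : Q = P := by
    have hz : Q - P = 0 := by
      refine Polynomial.eq_zero_of_natDegree_lt_card_of_eval_eq_zero _ hCβinj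
        (fun a => ?_) ?_
      · show Polynomial.eval (Polynomial.C (α (Fin.castLE hq a))) (Q - P) = 0
        rw [Polynomial.eval_sub, hQall (Fin.castLE hq a), sub_eq_zero]
        exact (hPeval a).symm
      · refine lt_of_le_of_lt ((Polynomial.natDegree_sub_le _ _).trans
          (max_le hQnd hPnd)) ?_
        simp [Fintype.card_fin]
    exact sub_eq_zero.mp hz
  -- coefficient formulas
  have hPc : ∀ i j, (P.coeff j).coeff i
      = ∑ a : Fin (ℓ + 1), (g a).coeff i * (L a).coeff j := by
    intro i j
    rw [hPdef, Polynomial.finset_sum_coeff, Polynomial.finset_sum_coeff]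
    refine Finset.sum_congr rfl fun a _ => ?_
    rw [Polynomial.coeff_C_mul, Polynomial.coeff_map, Polynomial.coeff_mul_C]
  have hQc : ∀ i j, (Q.coeff j).coeff i
      = ∑ a : Fin (ℓ + 1), (L a).coeff i * (g a).coeff j := by
    intro i j
    rw [hQdef, Polynomial.finset_sum_coeff, Polynomial.finset_sum_coeff]
    refine Finset.sum_congr rfl fun a _ => ?_
    rw [Polynomial.coeff_C_mul, Polynomial.coeff_map, Polynomial.coeff_mul_C]
  have hsym : ∀ i j, (P.coeff i).coeff j = (P.coeff j).coeff i := by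
    intro i j
    calc (P.coeff i).coeff j = (Q.coeff i).coeff j := by rw [hQP]
      _ = ∑ a : Fin (ℓ + 1), (L a).coeff j * (g a).coeff i := hQc j i
      _ = ∑ a : Fin (ℓ + 1), (g a).coeff i * (L a).coeff j :=
          Finset.sum_congr rfl fun a _ => mul_comm _ _
      _ = (P.coeff j).coeff i := (hPc i j).symm
  have hPcd : ∀ i, (P.coeff i).natDegree ≤ ℓ := by
    intro i
    have : P.coeff i = ∑ a : Fin (ℓ + 1), g a * Polynomial.C ((L a).coeff i) := by
      rw [hPdef, Polynomial.finset_sum_coeff]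
      exact Finset.sum_congr rfl fun a _ => by
        rw [Polynomial.coeff_C_mul, Polynomial.coeff_map]
    rw [this]
    refine Polynomial.natDegree_sum_le_of_forall_le _ _ fun a _ => ?_
    refine (Polynomial.natDegree_mul_le).trans ?_
    simp only [Polynomial.natDegree_C, add_zero]
    exact hdeg _
  have hPall : ∀ k : Fin q, P.eval (Polynomial.C (α k)) = f k := by
    intro k; rw [← hQP]; exact hQall k
  refine ⟨P, ⟨⟨hPnd, hPcd, hsym⟩, hPall⟩, ?_⟩
  -- uniqueness
  rintro R ⟨⟨hRnd, _, _⟩, hRall⟩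
  have hCαinj : Function.Injective (fun k : Fin q => (Polynomial.C (α k) : F[X])) :=
    fun a b h => hα (Polynomial.C_injective h)
  have hz : R - P = 0 := by
    refine Polynomial.eq_zero_of_natDegree_lt_card_of_eval_eq_zero _ hCαinj
      (fun k => ?_) ?_
    · rw [Polynomial.eval_sub, hRall k, hPall k, sub_self]
    · refine lt_of_le_of_lt ((Polynomial.natDegree_sub_le _ _).trans
        (max_le hRnd hPnd)) ?_
      simpa [Fintype.card_fin] using hq
  exact sub_eq_zero.mp hz
end

section
/- Let 𝔽 be a field, let d, t ≥ 0, let S be a finite index set, let (α_i)_{i∈S} be pairwise-distinct elements of 𝔽, let q be a univariate polynomial over 𝔽 of degree at most d, and let v : S → 𝔽 be values such that v_i ≠ q(α_i) holds for at most t indices i ∈ S. Then: (a) every univariate polynomial q′ of degree at most d satisfying q′(α_i) = v_i for at least d + t + 1 indices i ∈ S is equal to q; and (b) if moreover |S| ≥ d + 2t + 1, then q itself satisfies q(α_i) = v_i for at least d + t + 1 indices i ∈ S, so a polynomial as in (a) exists and equals q. (Correctness and termination of the online error-correction procedure OEC(d, t, 𝒫′): when at most t of the received points are incorrect and at least d +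 2t + 1 points are eventually received, the receiver recovers exactly the polynomial q.) -/
open Polynomial

theorem stmt4 {F : Type*} [Field F] {ι : Type*} (d t : ℕ)
    (S : Finset ι) (α : ι → F) (hα : Set.InjOn α ↑S)
    (q : Polynomial F) (hq : q.natDegree ≤ d)
    (v : ι → F) (herr : {i : ι | i ∈ S ∧ v i ≠ q.eval (α i)}.ncard ≤ t) :
    (∀ q' : Polynomial F, q'.natDegree ≤ d →
        d + t + 1 ≤ {i : ι | i ∈ S ∧ q'.eval (α i) = v i}.ncard → q' = q) ∧
    (d + 2 * t + 1 ≤ S.card →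
        d + t + 1 ≤ {i : ι | i ∈ S ∧ q.eval (α i) = v i}.ncard) := by
  classical
  set E : Finset ι := S.filter (fun i => v i ≠ q.eval (α i)) with hE
  have hEs : {i : ι | i ∈ S ∧ v i ≠ q.eval (α i)} = ↑E := by
    ext i; simp [hE]
  rw [hEs, Set.ncard_coe_finset] at herr
  constructor
  · intro q' hq' hcard
    set A : Finset ι := S.filter (fun i => q'.eval (α i) = v i) with hA
    have hAs : {i : ι | i ∈ S ∧ q'.eval (α i) = v i} = ↑A := by
      ext i; simp [hA]
    rw [hAs, Set.ncard_coe_finset] at hcard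
    have hsub : A ⊆ S := Finset.filter_subset _ _
    have hdiff : d + 1 ≤ (A \ E).card := by
      have := Finset.le_card_sdiff E A
      omega
    have himg : ((A \ E).image α).card = (A \ E).card := by
      apply Finset.card_image_of_injOn
      intro x hx y hy hxy
      exact hα (hsub (Finset.mem_sdiff.mp hx).1) (hsub (Finset.mem_sdiff.mp hy).1) hxy
    have hzero : q' - q = 0 := by
      apply Polynomial.eq_zero_of_natDegree_lt_card_of_eval_eq_zero' _ ((A \ E).image α)
      · intro x hx
        obtain ⟨i, hi, rfl⟩ := Finset.mem_image.mp hx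
        rw [Finset.mem_sdiff] at hi
        have h1 : q'.eval (α i) = v i := (Finset.mem_filter.mp hi.1).2
        have h2 : v i = q.eval (α i) := by
          by_contra h
          exact hi.2 (Finset.mem_filter.mpr ⟨hsub hi.1, h⟩)
        simp [h1, h2]
      · calc (q' - q).natDegree ≤ max q'.natDegree q.natDegree := Polynomial.natDegree_sub_le _ _
          _ ≤ d := by omega
          _ < ((A \ E).image α).card := by omega
    have := sub_eq_zero.mp hzero
    exact this
  · intro hS
    set A : Finset ι := S.filter (fun i => q.eval (α i) = v i) with hA
    have hAs : {i : ι | i ∈ S ∧ q.eval (α i) = v i} = ↑A := by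
      ext i; simp [hA]
    rw [hAs, Set.ncard_coe_finset]
    have : S \ E ⊆ A := by
      intro i hi
      rw [Finset.mem_sdiff] at hi
      refine Finset.mem_filter.mpr ⟨hi.1, ?_⟩
      by_contra h
      exact hi.2 (Finset.mem_filter.mpr ⟨hi.1, fun h' => h h'.symm⟩)
    have h1 := Finset.card_le_card this
    have h2 := Finset.le_card_sdiff E S
    omega
end

section
/- Let 𝔽 be a field, let t ≥ 0, let H be a finite index set with |H| ≥ t + 1, and let (α_j)_{j∈H} be pairwise-distinct elements of 𝔽. Let {f_j}_{j∈H} be univariate polynomials over 𝔽, each of degree at most t, that are pairwise consistent, i.e., f_j(α_k) = f_k(α_j) for all j, k ∈ H, and let Q⋆(x, y) be the unique symmetric bivariate polynomial of degree at most t in each variable with Q⋆(x, α_j) = f_j(x) for all j ∈ H. Then for every β ∈ 𝔽 and every univariate polynomial g of degree at most t satisfying g(α_j) = f_j(β) for all j ∈ H, it holds that g(x) = Q⋆(x, β) as polynomials. In particular, any degree-at-most-t polynomial that is pairwise consistent with the polynomials of at least t + 1 parties holding polynomials on Q⋆ also lies on Q⋆. -/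
open Polynomial

lemma sym_eval_expand {F : Type*} [Field F] {t : ℕ} (Q : Polynomial (Polynomial F))
    (h1 : Q.natDegree ≤ t) (b : F) :
    Polynomial.eval (Polynomial.C b) Q =
      ∑ i ∈ Finset.range (t + 1), Polynomial.C (b ^ i) * Q.coeff i := by
  rw [Polynomial.eval_eq_sum_range' (Nat.lt_succ_of_le h1)]
  refine Finset.sum_congr rfl fun i _ => ?_
  rw [← Polynomial.C_pow]; ring

lemma sym_swap {F : Type*} [Field F] {t : ℕ} (Q : Polynomial (Polynomial F))
    (hQ : IsSymBivariate t Q) (a b : F) :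
    (Polynomial.eval (Polynomial.C b) Q).eval a
      = (Polynomial.eval (Polynomial.C a) Q).eval b := by
  obtain ⟨h1, h2, h3⟩ := hQ
  have expand : ∀ c d : F, (Polynomial.eval (Polynomial.C c) Q).eval d
      = ∑ i ∈ Finset.range (t + 1), ∑ j ∈ Finset.range (t + 1),
          (Q.coeff i).coeff j * c ^ i * d ^ j := by
    intro c d
    rw [sym_eval_expand Q h1, Polynomial.eval_finset_sum]
    refine Finset.sum_congr rfl fun i _ => ?_
    rw [Polynomial.eval_mul, Polynomial.eval_C,
      Polynomial.eval_eq_sum_range' (Nat.lt_succ_of_le (h2 i)), Finset.mul_sum]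
    refine Finset.sum_congr rfl fun j _ => ?_
    ring
  rw [expand, expand, Finset.sum_comm]
  refine Finset.sum_congr rfl fun i _ => Finset.sum_congr rfl fun j _ => ?_
  rw [h3 i j]; ring

theorem stmt6 {F : Type*} [Field F] {ι : Type*} (t : ℕ)
    (H : Finset ι) (hH : t + 1 ≤ H.card)
    (α : ι → F) (hα : Set.InjOn α ↑H)
    (f : ι → Polynomial F) (hdeg : ∀ j ∈ H, (f j).natDegree ≤ t)
    (hcons : ∀ j ∈ H, ∀ k ∈ H, (f j).eval (α k) = (f k).eval (α j))
    (Q : Polynomial (Polynomial F)) (hQ : IsSymBivariate t Q)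
    (hQf : ∀ j ∈ H, Polynomial.eval (Polynomial.C (α j)) Q = f j)
    (β : F) (g : Polynomial F) (hg : g.natDegree ≤ t)
    (hgf : ∀ j ∈ H, g.eval (α j) = (f j).eval β) :
    g = Polynomial.eval (Polynomial.C β) Q := by
  classical
  obtain ⟨h1, h2, h3⟩ := hQ
  set h := Polynomial.eval (Polynomial.C β) Q with hh
  have hdegh : h.natDegree ≤ t := by
    rw [hh, sym_eval_expand Q h1]
    refine (Polynomial.natDegree_sum_le _ _).trans ?_
    simp only [Finset.fold_max_le]
    refine ⟨by omega, fun i _ => ?_⟩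
    exact (Polynomial.natDegree_mul_le).trans (by simp [h2 i])
  have key : ∀ j ∈ H, h.eval (α j) = g.eval (α j) := by
    intro j hj
    rw [hgf j hj, ← hQf j hj, hh, sym_swap Q ⟨h1, h2, h3⟩]
  have : g - h = 0 := by
    apply Polynomial.eq_zero_of_natDegree_lt_card_of_eval_eq_zero' _ (H.image α)
    · intro x hx
      obtain ⟨j, hj, rfl⟩ := Finset.mem_image.mp hx
      simp [key j hj]
    · calc (g - h).natDegree < t + 1 :=
            Nat.lt_succ_of_le ((Polynomial.natDegree_sub_le _ _).trans (by simp [hg, hdegh]))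
        _ ≤ H.card := hH
        _ = (H.image α).card := (Finset.card_image_of_injOn hα).symm
  exact sub_eq_zero.mp this
end

section
/- Let 𝔽 be a field, let d ≥ 0, let α_1, …, α_{2d+1} be pairwise-distinct elements of 𝔽, and let (x_i, y_i, z_i) ∈ 𝔽³ for i = 1, …, 2d+1 be arbitrary triples. Let X be the unique univariate polynomial of degree at most d with X(α_i) = x_i for i = 1, …, d+1; let Y be the unique univariate polynomial of degree at most d with Y(α_i) = y_i for i = 1, …, d+1; and let Z be the unique univariate polynomial of degree at most 2d with Z(α_i) = z_i for i = 1, …, d+1 and Z(α_i) = X(α_i)·Y(α_i) − x_i·y_i + z_i for i = d+2, …, 2d+1 (the latter value being the output of Beaver's re-randomization of the product X(α_i)·Y(α_i) using the triple (x_i, y_i, z_i)). Then for every i ∈ {1, …, 2d+1}, the equality Z(α_i) = X(α_i)·Y(α_i) holds if and only if (x_i, y_i, z_i) is a multiplication-triple (i.e., z_i = x_i·y_i); and Z = X·Y as polynomials if and only if (x_i, y_i, z_i) is a multiplication-triple for every i ∈ {1, …, 2d+1}. (Correctness of the triple-transformation protocol Π_TripTrans.) -/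
open Polynomial

theorem stmt7 {F : Type*} [Field F] (d : ℕ)
    (α : Fin (2 * d + 1) → F) (hα : Function.Injective α)
    (x y z : Fin (2 * d + 1) → F)
    (X Y Z : Polynomial F)
    (hXdeg : X.natDegree ≤ d)
    (hX : ∀ i : Fin (2 * d + 1), (i : ℕ) < d + 1 → X.eval (α i) = x i)
    (hYdeg : Y.natDegree ≤ d)
    (hY : ∀ i : Fin (2 * d + 1), (i : ℕ) < d + 1 → Y.eval (α i) = y i)
    (hZdeg : Z.natDegree ≤ 2 * d)
    (hZ₁ : ∀ i : Fin (2 * d + 1), (i : ℕ) < d + 1 → Z.eval (α i) = z i)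
    (hZ₂ : ∀ i : Fin (2 * d + 1), d + 1 ≤ (i : ℕ) →
        Z.eval (α i) = X.eval (α i) * Y.eval (α i) - x i * y i + z i) :
    (∀ i : Fin (2 * d + 1),
        (Z.eval (α i) = X.eval (α i) * Y.eval (α i) ↔ z i = x i * y i)) ∧
    (Z = X * Y ↔ ∀ i : Fin (2 * d + 1), z i = x i * y i) := by
  have key : ∀ i : Fin (2 * d + 1),
      (Z.eval (α i) = X.eval (α i) * Y.eval (α i) ↔ z i = x i * y i) := by
    intro i
    rcases lt_or_ge (i : ℕ) (d + 1) with h | h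
    · rw [hZ₁ i h, hX i h, hY i h]
    · rw [hZ₂ i h]
      constructor
      · intro he; linear_combination he
      · intro he; linear_combination he
  refine ⟨key, ?_, ?_⟩
  · intro hZXY i
    rw [← (key i), hZXY, eval_mul]
  · intro hall
    have hzero : Z - X * Y = 0 := by
      apply Polynomial.eq_zero_of_natDegree_lt_card_of_eval_eq_zero _ hα
      · intro i
        simp only [eval_sub, eval_mul]
        rw [(key i).2 (hall i)]
        ring
      · have h1 : (X * Y).natDegree ≤ 2 * d := by
          calc (X * Y).natDegree ≤ X.natDegree + Y.natDegree := natDegree_mul_le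
            _ ≤ 2 * d := by omega
        have := natDegree_sub_le Z (X * Y)
        simp [Fintype.card_fin]
        omega
    exact sub_eq_zero.mp hzero
end

section
/- Let 𝔽 be a finite field, let d ≥ 0, let C be a finite index set with |C| ≤ d, let (α_i)_{i∈C} be pairwise-distinct nonzero elements of 𝔽, let (v_i)_{i∈C} be an arbitrary family of elements of 𝔽, and let s₁, s₂ ∈ 𝔽. Then the number of univariate polynomials f over 𝔽 of degree at most d satisfying f(0) = s₁ and f(α_i) = v_i for all i ∈ C equals the number of univariate polynomials f of degree at most d satisfying f(0) = s₂ and f(α_i) = v_i for all i ∈ C; both counts equal |𝔽|^{d − |C|}. Consequently, for a value s that is d-shared via a uniformly random degree-at-most-d polynomial f with f(0) = s, any |C| ≤ d shares f(α_i) have a joint distribution independent of the secret s. (Perfect privacy of d-sharing against at most d shares.) -/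
open Polynomial

lemma count_interp {F : Type*} [Field F] [Fintype F] (n : ℕ) (s : Finset F)
    (hs : s.card ≤ n) (r : F → F) :
    {f : Polynomial F | f.degree < (n : WithBot ℕ) ∧ ∀ x ∈ s, f.eval x = r x}.ncard
      = Fintype.card F ^ (n - s.card) := by
  classical
  set L : Polynomial F := Lagrange.interpolate s id r with hLdef
  have hinj : Set.InjOn (id : F → F) ↑s := Set.injOn_id _
  have hLdeg : L.degree < (s.card : WithBot ℕ) := Lagrange.degree_interpolate_lt r hinj
  have hLeval : ∀ x ∈ s, L.eval x = r x := fun x hx =>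
    Lagrange.eval_interpolate_at_node r hinj hx
  set Z : Polynomial F := ∏ x ∈ s, (X - C x) with hZdef
  have hZmonic : Z.Monic := monic_prod_of_monic _ _ fun x _ => monic_X_sub_C x
  have hZne : Z ≠ 0 := hZmonic.ne_zero
  have hZdeg : Z.natDegree = s.card := by
    rw [hZdef, natDegree_prod _ _ fun x _ => X_sub_C_ne_zero x]
    simp [natDegree_X_sub_C]
  have hZdeg' : Z.degree = (s.card : WithBot ℕ) := by
    rw [degree_eq_natDegree hZne, hZdeg]
  have hZroot : ∀ x ∈ s, Z.eval x = 0 := by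
    intro x hx
    rw [hZdef, eval_prod]
    exact Finset.prod_eq_zero hx (by simp)
  set T : Set (Polynomial F) :=
    {q : Polynomial F | q.degree < ((n - s.card : ℕ) : WithBot ℕ)} with hTdef
  set S : Set (Polynomial F) :=
    {f : Polynomial F | f.degree < (n : WithBot ℕ) ∧ ∀ x ∈ s, f.eval x = r x} with hSdef
  have hbij : Set.BijOn (fun q => q * Z + L) T S := by
    refine ⟨?_, ?_, ?_⟩
    · intro q hq
      constructor
      · have h1 : (q * Z).degree < (n : WithBot ℕ) := by
          rcases eq_or_ne q 0 with rfl | hq0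
          · rw [zero_mul, degree_zero]; exact WithBot.bot_lt_coe n
          · rw [degree_mul, degree_eq_natDegree hq0, hZdeg']
            have : q.natDegree < n - s.card := by
              have := hq
              rw [hTdef, Set.mem_setOf_eq, degree_eq_natDegree hq0,
                Nat.cast_lt] at this
              exact this
            rw [← Nat.cast_add, Nat.cast_lt]
            omega
        have h2 : L.degree < (n : WithBot ℕ) :=
          lt_of_lt_of_le hLdeg (by exact_mod_cast hs)
        exact lt_of_le_of_lt (degree_add_le _ _) (max_lt h1 h2)
      · intro x hx
        simp [hZroot x hx, hLeval x hx]
    · intro q1 _ q2 _ h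
      simp only [add_left_inj] at h
      exact mul_right_cancel₀ hZne h
    · intro f hf
      obtain ⟨hfdeg, hfeval⟩ := hf
      have hdvd : Z ∣ f - L := by
        rw [hZdef]
        refine Finset.prod_dvd_of_coprime ?_ ?_
        · intro x hx y hy hxy
          exact isCoprime_X_sub_C_of_isUnit_sub (sub_ne_zero_of_ne hxy).isUnit
        · intro x hx
          rw [dvd_iff_isRoot]
          simp [IsRoot, hfeval x hx, hLeval x hx]
      obtain ⟨q, hq⟩ := hdvd
      have hgdeg : (f - L).degree < (n : WithBot ℕ) :=
        lt_of_le_of_lt (degree_sub_le _ _)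
          (max_lt hfdeg (lt_of_lt_of_le hLdeg (by exact_mod_cast hs)))
      refine ⟨q, ?_, ?_⟩
      · rw [hTdef, Set.mem_setOf_eq]
        rcases eq_or_ne q 0 with rfl | hq0
        · rw [degree_zero]; exact WithBot.bot_lt_coe _
        · rw [hq, degree_mul, hZdeg', degree_eq_natDegree hq0] at hgdeg
          rw [degree_eq_natDegree hq0, Nat.cast_lt]
          rw [← Nat.cast_add, Nat.cast_lt] at hgdeg
          omega
      · simp only
        rw [mul_comm, ← hq]
        ring
  have hSncard : S.ncard = T.ncard := by
    rw [← hbij.image_eq, Set.ncard_image_of_injOn hbij.injOn]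
  have hTcard : T.ncard = Fintype.card F ^ (n - s.card) := by
    have hTeq : T = ↑(Polynomial.degreeLT F (n - s.card)) := by
      ext q
      simp [hTdef, Polynomial.mem_degreeLT]
    have h1 : Nat.card (Polynomial.degreeLT F (n - s.card))
        = Fintype.card F ^ (n - s.card) := by
      rw [Nat.card_congr (Polynomial.degreeLTEquiv F _).toEquiv]
      simp [Nat.card_eq_fintype_card]
    rw [hTeq, ← Nat.card_coe_set_eq]
    exact h1
  rw [hSncard, hTcard]

theorem stmt8 {F : Type*} [Field F] [Fintype F] {ι : Type*} (d : ℕ)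
    (C : Finset ι) (hC : C.card ≤ d)
    (α : ι → F) (hinj : Set.InjOn α ↑C) (hne : ∀ i ∈ C, α i ≠ 0)
    (v : ι → F) (s₁ s₂ : F) :
    {f : Polynomial F |
        f.natDegree ≤ d ∧ f.eval 0 = s₁ ∧ ∀ i ∈ C, f.eval (α i) = v i}.ncard
      = {f : Polynomial F |
        f.natDegree ≤ d ∧ f.eval 0 = s₂ ∧ ∀ i ∈ C, f.eval (α i) = v i}.ncard ∧
    {f : Polynomial F |
        f.natDegree ≤ d ∧ f.eval 0 = s₁ ∧ ∀ i ∈ C, f.eval (α i) = v i}.ncard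
      = Fintype.card F ^ (d - C.card) := by
  classical
  have key : ∀ t : F,
      {f : Polynomial F |
          f.natDegree ≤ d ∧ f.eval 0 = t ∧ ∀ i ∈ C, f.eval (α i) = v i}.ncard
        = Fintype.card F ^ (d - C.card) := by
    intro t
    set s : Finset F := insert 0 (C.image α) with hsdef
    have h0 : (0 : F) ∉ C.image α := by
      simp only [Finset.mem_image, not_exists]
      intro i
      rintro ⟨hi, h⟩
      exact hne i hi h
    set r : F → F := fun x =>
      if x = 0 then t
      else if h : ∃ i ∈ C, α i = x then v h.choose else 0 with hrdef
    have hr0 : r 0 = t := by simp [hrdef]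
    have hr : ∀ i ∈ C, r (α i) = v i := by
      intro i hi
      have hne' : α i ≠ 0 := hne i hi
      have hex : ∃ j ∈ C, α j = α i := ⟨i, hi, rfl⟩
      rw [hrdef]
      simp only [hne', if_neg, dif_pos hex, if_false]
      obtain ⟨hj, hji⟩ := hex.choose_spec
      exact congrArg v (hinj hj hi hji)
    have hdeg : ∀ f : Polynomial F,
        f.natDegree ≤ d ↔ f.degree < ((d + 1 : ℕ) : WithBot ℕ) := by
      intro f
      constructor
      · intro h
        exact lt_of_le_of_lt degree_le_natDegree (Nat.cast_lt.mpr (by omega))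
      · intro h
        by_cases hf : f = 0
        · simp [hf]
        · rw [degree_eq_natDegree hf, Nat.cast_lt] at h
          omega
    have hscard : s.card = C.card + 1 := by
      rw [hsdef, Finset.card_insert_of_notMem h0, Finset.card_image_of_injOn hinj]
    have hseq : {f : Polynomial F |
          f.natDegree ≤ d ∧ f.eval 0 = t ∧ ∀ i ∈ C, f.eval (α i) = v i}
        = {f : Polynomial F |
          f.degree < ((d + 1 : ℕ) : WithBot ℕ) ∧ ∀ x ∈ s, f.eval x = r x} := by
      ext f
      simp only [Set.mem_setOf_eq]
      constructor
      · rintro ⟨h1, h2, h3⟩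
        refine ⟨(hdeg f).1 h1, ?_⟩
        intro x hx
        rw [hsdef] at hx
        rcases Finset.mem_insert.mp hx with rfl | hx
        · rw [h2, hr0]
        · obtain ⟨i, hi, rfl⟩ := Finset.mem_image.mp hx
          rw [h3 i hi, hr i hi]
      · rintro ⟨h1, h2⟩
        refine ⟨(hdeg f).2 h1, ?_, ?_⟩
        · rw [h2 0 (by rw [hsdef]; exact Finset.mem_insert_self _ _), hr0]
        · intro i hi
          rw [h2 (α i)
            (by rw [hsdef]; exact Finset.mem_insert_of_mem (Finset.mem_image_of_mem _ hi)),
            hr i hi]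
    rw [hseq, count_interp (d + 1) s (by omega) r, hscard]
    congr 1
    omega
  exact ⟨(key s₁).trans (key s₂).symm, key s₁⟩
end
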